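/- The smash product A#H is a Frobenius extension of A with Frobenius system (e = (1 # t₂) ⊗_A (1 # S̄(t₁)), ν̄ = id_A # φ); concretely: the map ν̄ : A#H → A, ν̄(a # h) = φ(h)·a, is an A-bimodule map, i.e. ν̄((a # 1)·r·(a' # 1)) = a·ν̄(r)·a' for all a, a' ∈ A and r ∈ A#H, and the dual-basis identities hold: for all r ∈ A#H, Σ ν̄(r·(1 # t₂)) # S̄(t₁) = r and Σ (1 # t₂)·(ν̄((1 # S̄(t₁))·r) # 1) = r (summation over the Sweedler components of t). -/

import Mathlib

open TensorProduct

noncomputable section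

variable {k H A : Type*} [CommRing k] [Ring H] [HopfAlgebra k H]
  [Ring A] [Algebra k A]

/-- For a left `H`-module structure `act` on `A`, the map `H ⊗ A → A ⊗ H`,
`h ⊗ a ↦ (h₁ · a) ⊗ h₂`, inducing the smash product. -/
def smashRH (act : H →ₗ[k] A →ₗ[k] A) : H ⊗[k] A →ₗ[k] A ⊗[k] H :=
  (TensorProduct.comm k H A).toLinearMap ∘ₗ
    LinearMap.lTensor H (TensorProduct.lift act) ∘ₗ
    (TensorProduct.assoc k H H A).toLinearMap ∘ₗ
    LinearMap.rTensor A (TensorProduct.comm k H H).toLinearMap ∘ₗ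
    LinearMap.rTensor A Coalgebra.comul

/-- The map `H ⊗ (A ⊗ H) → A ⊗ H`, `h ⊗ (b ⊗ g) ↦ (h₁ · b) ⊗ h₂ g`. -/
def hInner (act : H →ₗ[k] A →ₗ[k] A) : H ⊗[k] (A ⊗[k] H) →ₗ[k] A ⊗[k] H :=
  LinearMap.lTensor A (LinearMap.mul' k H) ∘ₗ (TensorProduct.assoc k A H H).toLinearMap ∘ₗ
    LinearMap.rTensor H (smashRH act) ∘ₗ (TensorProduct.assoc k H A H).symm.toLinearMap

/-- The smash product multiplication on `A # H = A ⊗ H`: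
`(a # h)(b # g) = a (h₁ · b) # h₂ g`, as a linear map. -/
def hMulL (act : H →ₗ[k] A →ₗ[k] A) :
    (A ⊗[k] H) ⊗[k] (A ⊗[k] H) →ₗ[k] A ⊗[k] H :=
  LinearMap.rTensor H (LinearMap.mul' k A) ∘ₗ
    (TensorProduct.assoc k A A H).symm.toLinearMap ∘ₗ
    LinearMap.lTensor A (hInner act) ∘ₗ
    (TensorProduct.assoc k A H (A ⊗[k] H)).toLinearMap

/-- The smash product multiplication `(a # h)(b # g) = a (h₁ · b) # h₂ g`. -/
def hMul (act : H →ₗ[k] A →ₗ[k] A) (x y : A ⊗[k] H) : A ⊗[k] H :=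
  hMulL act (x ⊗ₜ[k] y)

/-- The Frobenius map `ν̄ : A # H → A`, `a # h ↦ φ(h) a`. -/
def hNu (φ : H →ₗ[k] k) : A ⊗[k] H →ₗ[k] A :=
  (TensorProduct.rid k A).toLinearMap ∘ₗ LinearMap.lTensor A φ

/-- The Frobenius element `e = t₂ ⊗ S̄(t₁) ∈ H ⊗ H`. -/
def hE (Sbar : H →ₗ[k] H) (t : H) : H ⊗[k] H :=
  TensorProduct.map LinearMap.id Sbar
    (TensorProduct.comm k H H (Coalgebra.comul t))

/-!
The map `ν̄` is left `A`-linear on the nose, and right `A`-linear because `φ` is a left integral: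
`∑ φ(g₂) g₁ = φ(g) 1`. On `r = a # h` the two dual-basis sums reduce, after cancelling the
action, to `∑ φ(h t₂) S̄(t₁) = h` and `∑ φ(S̄(t₁) h) t₂ = h`, which follow from the Frobenius
property of `(t₂ ⊗ S̄(t₁), φ)` by applying `φ` to one leg. In the second sum `Δ(S̄(t₁))` appears;
since `S̄` reverses the comultiplication, coassociativity turns it into `∑ x₂ S̄(x₁) ⊗ x₃ = 1 ⊗ x`,
which collapses the extra factor. That the antipode is an anti-coalgebra map comes from comparing
two convolution inverses of `Δ`.
-/

open Coalgebra HopfAlgebra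

section Antipode

variable {R C : Type*} [CommSemiring R] [Semiring C] [HopfAlgebra R C]

open WithConv Algebra.TensorProduct

theorem toConv_includeLeft_mul_toConv_includeRight :
    toConv (includeLeft : C →ₐ[R] C ⊗[R] C).toLinearMap * toConv includeRight.toLinearMap =
      toConv (comul (R := R) (A := C)) := by
  ext c
  simp [(ℛ R c).convMul_apply, ← (ℛ R c).eq]

theorem toConv_includeRight_antipode_mul_toConv_includeLeft_antipode :
    toConv ((includeRight : C →ₐ[R] C ⊗[R] C).toLinearMap ∘ₗ antipode R) *
        toConv (includeLeft.toLinearMap ∘ₗ antipode R) =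
      toConv (map (antipode R) (antipode R) ∘ₗ (TensorProduct.comm R C C).toLinearMap ∘ₗ
        comul) := by
  ext c
  simp [(ℛ R c).convMul_apply, ← (ℛ R c).eq]

theorem toConv_algHom_comp_antipode_mul_toConv_algHom {B : Type*} [Semiring B] [Algebra R B]
    (f : C →ₐ[R] B) :
    toConv (f.toLinearMap ∘ₗ antipode R) * toConv f.toLinearMap = 1 := by
  have h := LinearMap.algHom_comp_convMul_distrib f (toConv (antipode R)) (toConv .id)
  rw [LinearMap.antipode_mul_id] at h
  ext c
  simpa using congr($h c).symm

theorem HopfAlgebra.comul_comp_antipode :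
    comul ∘ₗ antipode R (A := C) =
      map (antipode R) (antipode R) ∘ₗ (TensorProduct.comm R C C).toLinearMap ∘ₗ comul := by
  -- Both sides are convolution inverses of `Δ`: the right-hand side from the left, by the two
  -- factorizations above, and `Δ ∘ S` from the right (`LinearMap.comul_right_inv`).
  have left_inv : toConv (map (antipode R) (antipode R) ∘ₗ
      (TensorProduct.comm R C C).toLinearMap ∘ₗ comul) * toConv (comul (R := R) (A := C)) = 1 := by
    rw [← toConv_includeRight_antipode_mul_toConv_includeLeft_antipode,
      ← toConv_includeLeft_mul_toConv_includeRight, mul_assoc,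
      ← mul_assoc _ (toConv includeLeft.toLinearMap),
      toConv_algHom_comp_antipode_mul_toConv_algHom, one_mul,
      toConv_algHom_comp_antipode_mul_toConv_algHom]
  exact congr(ofConv $(left_inv_eq_right_inv left_inv LinearMap.comul_right_inv)).symm

end Antipode

section InverseAntipode

variable {R C : Type*} [CommSemiring R] [Semiring C] [HopfAlgebra R C] {Sbar : C →ₗ[R] C}

theorem comul_sbar (hS1 : ∀ c, Sbar (antipode R c) = c) (hS2 : ∀ c, antipode R (Sbar c) = c)
    (x : C) : comul (R := R) (Sbar x) = TensorProduct.comm R C C (map Sbar Sbar (comul x)) := by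
  have h := congr($(HopfAlgebra.comul_comp_antipode (R := R)) (Sbar x))
  simp only [LinearMap.comp_apply, hS2, LinearEquiv.coe_coe] at h
  rw [h, ← LinearMap.comp_apply (map Sbar Sbar), ← map_comp, show Sbar ∘ₗ antipode R = .id from
    LinearMap.ext hS1, map_id, LinearMap.id_apply, comm_comm]

def Coalgebra.Repr.sbar (hS1 : ∀ c, Sbar (antipode R c) = c)
    (hS2 : ∀ c, antipode R (Sbar c) = c) {x : C} {ι : Type*} (repr : Repr R x ι) :
    Repr R (Sbar x) ι where
  index := repr.index
  left i := Sbar (repr.right i)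
  right i := Sbar (repr.left i)
  eq := by simp [comul_sbar hS1 hS2, ← repr.eq, map_sum]

theorem sum_right_mul_sbar_left (hS1 : ∀ c, Sbar (antipode R c) = c)
    (hS2 : ∀ c, antipode R (Sbar c) = c) {x : C} {ι : Type*} (repr : Repr R x ι) :
    ∑ i ∈ repr.index, repr.right i * Sbar (repr.left i) = algebraMap R C (counit x) := by
  have h := sum_antipode_mul_eq_algebraMap_counit (repr.sbar hS1 hS2)
  simp only [Coalgebra.Repr.sbar, hS2] at h
  rw [h, ← counit_antipode (R := R) (Sbar x), hS2]

theorem sum_sum_comul_right_mul_sbar_left (hS1 : ∀ c, Sbar (antipode R c) = c)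
    (hS2 : ∀ c, antipode R (Sbar c) = c) {x : C} {ι : Type*} (repr : Repr R x ι) :
    ∑ i ∈ repr.index, ∑ j ∈ (ℛ R (repr.right i)).index,
      ((ℛ R (repr.right i)).left j * Sbar (repr.left i)) ⊗ₜ[R] (ℛ R (repr.right i)).right j =
        1 ⊗ₜ x := by
  have h := congr(LinearMap.rTensor C
    (LinearMap.mul' R C ∘ₗ TensorProduct.comm R C C ∘ₗ LinearMap.rTensor C Sbar)
    ((TensorProduct.assoc R C C C).symm
      $(sum_tmul_tmul_eq repr (fun i => ℛ R (repr.left i)) (fun i => ℛ R (repr.right i)))))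
  simp only [map_sum, assoc_symm_tmul, LinearMap.rTensor_tmul, LinearMap.comp_apply,
    LinearEquiv.coe_coe, comm_tmul, LinearMap.mul'_apply] at h
  rw [← h]
  simp_rw [← sum_tmul, sum_right_mul_sbar_left hS1 hS2, Algebra.algebraMap_eq_smul_one, smul_tmul,
    ← tmul_sum, sum_counit_smul]

end InverseAntipode

section Frobenius

variable {R B : Type*} [CommSemiring R] [Semiring B] [Algebra R B] {e : B ⊗[R] B}
  {φ : B →ₗ[R] R}

theorem lid_rTensor_comp_mulLeft
    (he : ∀ b, LinearMap.rTensor B (LinearMap.mulLeft R b) e =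
      LinearMap.lTensor B (LinearMap.mulRight R b) e)
    (hφ : TensorProduct.lid R B (LinearMap.rTensor B φ e) = 1) (b : B) :
    TensorProduct.lid R B (LinearMap.rTensor B (φ ∘ₗ LinearMap.mulLeft R b) e) = b := by
  have key : (TensorProduct.lid R B).toLinearMap ∘ₗ LinearMap.rTensor B φ ∘ₗ
      LinearMap.lTensor B (LinearMap.mulRight R b) =
        LinearMap.mulRight R b ∘ₗ (TensorProduct.lid R B).toLinearMap ∘ₗ LinearMap.rTensor B φ :=
    TensorProduct.ext' fun x y => by simp
  have := congr($key e)
  simp only [LinearMap.comp_apply, LinearEquiv.coe_coe] at this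
  rw [LinearMap.rTensor_comp_apply, he, this, hφ, LinearMap.mulRight_apply, one_mul]

theorem rid_lTensor_comp_mulRight
    (he : ∀ b, LinearMap.rTensor B (LinearMap.mulLeft R b) e =
      LinearMap.lTensor B (LinearMap.mulRight R b) e)
    (hφ : TensorProduct.rid R B (LinearMap.lTensor B φ e) = 1) (b : B) :
    TensorProduct.rid R B (LinearMap.lTensor B (φ ∘ₗ LinearMap.mulRight R b) e) = b := by
  have key : (TensorProduct.rid R B).toLinearMap ∘ₗ LinearMap.lTensor B φ ∘ₗ
      LinearMap.rTensor B (LinearMap.mulLeft R b) =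
        LinearMap.mulLeft R b ∘ₗ (TensorProduct.rid R B).toLinearMap ∘ₗ LinearMap.lTensor B φ :=
    TensorProduct.ext' fun x y => by simp
  have := congr($key e)
  simp only [LinearMap.comp_apply, LinearEquiv.coe_coe] at this
  rw [LinearMap.lTensor_comp_apply, ← he, this, hφ, LinearMap.mulLeft_apply, mul_one]

end Frobenius

section SmashProduct

variable (act : H →ₗ[k] A →ₗ[k] A) (φ : H →ₗ[k] k) {Sbar : H →ₗ[k] H}

theorem smashRH_tmul {h : H} {ι : Type*} (repr : Repr k h ι) (a : A) :
    smashRH act (h ⊗ₜ a) = ∑ i ∈ repr.index, act (repr.left i) a ⊗ₜ repr.right i := by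
  simp [smashRH, ← repr.eq, sum_tmul]

theorem hMulL_tmul (x y : A ⊗[k] H) : hMulL act (x ⊗ₜ y) = hMul act x y := rfl

theorem hMul_tmul {h : H} {ι : Type*} (repr : Repr k h ι) (a b : A) (g : H) :
    hMul act (a ⊗ₜ h) (b ⊗ₜ g) =
      ∑ i ∈ repr.index, (a * act (repr.left i) b) ⊗ₜ (repr.right i * g) := by
  simp [hMul, hMulL, hInner, smashRH_tmul act repr, sum_tmul, tmul_sum]

theorem hNu_tmul (a : A) (h : H) : hNu φ (a ⊗ₜ h) = φ h • a := by
  simp [hNu]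

theorem hE_eq_sum {t : H} {ι : Type*} (repr : Repr k t ι) :
    hE Sbar t = ∑ i ∈ repr.index, repr.right i ⊗ₜ Sbar (repr.left i) := by
  simp [hE, ← repr.eq]

theorem hMul_tmul_one (hact1 : ∀ a : A, act 1 a = a) (a b : A) (g : H) :
    hMul act (a ⊗ₜ 1) (b ⊗ₜ g) = (a * b) ⊗ₜ g := by
  simp [hMul, hMulL, hInner, smashRH, Bialgebra.comul_one, Algebra.TensorProduct.one_def, hact1]

theorem hNu_tmul_one_hMul (hact1 : ∀ a : A, act 1 a = a) (a : A) (r : A ⊗[k] H) :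
    hNu φ (hMul act (a ⊗ₜ 1) r) = a * hNu φ r := by
  induction r using TensorProduct.induction_on with
  | zero => simp [hMul]
  | tmul b g => rw [hMul_tmul_one act hact1, hNu_tmul, hNu_tmul, mul_smul_comm]
  | add r s hr hs => simp_all [hMul, tmul_add, mul_add]

theorem hNu_hMul_tmul_one (hact1 : ∀ a : A, act 1 a = a)
    (hφ : ∀ h : H, TensorProduct.rid k H (LinearMap.lTensor H φ (comul h)) = φ h • (1 : H))
    (a : A) (r : A ⊗[k] H) :
    hNu φ (hMul act r (a ⊗ₜ 1)) = hNu φ r * a := by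
  induction r using TensorProduct.induction_on with
  | zero => simp [hMul]
  | tmul b g =>
    have hφg : ∑ i ∈ (ℛ k g).index, φ ((ℛ k g).right i) • (ℛ k g).left i = φ g • 1 := by
      simpa [← (ℛ k g).eq] using hφ g
    calc hNu φ (hMul act (b ⊗ₜ g) (a ⊗ₜ 1))
        = b * act (∑ i ∈ (ℛ k g).index, φ ((ℛ k g).right i) • (ℛ k g).left i) a := by
          simp [hMul_tmul act (ℛ k g), hNu_tmul, Finset.mul_sum]
      _ = hNu φ (b ⊗ₜ g) * a := by
          rw [hφg, hNu_tmul, map_smul, LinearMap.smul_apply, hact1, mul_smul_comm, smul_mul_assoc]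
  | add r s hr hs => simp_all [hMul, add_tmul, add_mul]

theorem hNu_hMul_one_tmul
    (hactone : ∀ h : H, act h (1 : A) = counit (R := k) h • (1 : A)) (a : A) (h x : H) :
    hNu φ (hMul act (a ⊗ₜ h) (1 ⊗ₜ x)) = φ (h * x) • a := by
  conv_rhs => rw [← sum_counit_smul (ℛ k h)]
  simp [hMul_tmul act (ℛ k h), hNu_tmul, hactone, Finset.sum_mul, Finset.sum_smul, smul_smul,
    mul_comm]

theorem smash_dualBasis_left {t : H}
    (hfr1 : ∀ h : H, LinearMap.rTensor H (LinearMap.mulLeft k h) (hE Sbar t) =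
      LinearMap.lTensor H (LinearMap.mulRight k h) (hE Sbar t))
    (hfr2 : TensorProduct.lid k H (LinearMap.rTensor H φ (hE Sbar t)) = 1)
    (hactone : ∀ h : H, act h (1 : A) = counit (R := k) h • (1 : A)) (r : A ⊗[k] H) :
    TensorProduct.map
        (hNu φ ∘ₗ hMulL act ∘ₗ TensorProduct.mk k (A ⊗[k] H) (A ⊗[k] H) r ∘ₗ
          TensorProduct.mk k A H 1)
        LinearMap.id (hE Sbar t) = r := by
  induction r using TensorProduct.induction_on with
  | zero => simp
  | tmul a h =>
    have frob := lid_rTensor_comp_mulLeft hfr1 hfr2 h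
    rw [hE_eq_sum (ℛ k t)] at frob ⊢
    simp only [map_sum, map_tmul, LinearMap.comp_apply, TensorProduct.mk_apply, LinearMap.id_apply,
      LinearMap.rTensor_tmul, LinearMap.mulLeft_apply, lid_tmul, hMulL_tmul] at frob ⊢
    simp_rw [hNu_hMul_one_tmul act φ hactone, smul_tmul, ← tmul_sum, frob]
  | add r s hr hs =>
    simp only [map_add, LinearMap.comp_add, LinearMap.add_comp, map_add_left, LinearMap.add_apply,
      hr, hs]

theorem hMul_one_tmul_tmul_one (w : H) (b : A) :
    hMul act (1 ⊗ₜ w) (b ⊗ₜ 1) = smashRH act (w ⊗ₜ b) := by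
  simp [hMul_tmul act (ℛ k w), smashRH_tmul act (ℛ k w)]

theorem hNu_one_tmul_sbar_hMul (hS1 : ∀ h : H, Sbar (antipode k h) = h)
    (hS2 : ∀ h : H, antipode k (Sbar h) = h) {u : H} {ι : Type*} (repr : Repr k u ι)
    (a : A) (h : H) :
    hNu φ (hMul act (1 ⊗ₜ Sbar u) (a ⊗ₜ h)) =
      ∑ i ∈ repr.index, φ (Sbar (repr.left i) * h) • act (Sbar (repr.right i)) a := by
  simp [hMul_tmul act (repr.sbar hS1 hS2), Coalgebra.Repr.sbar, hNu_tmul]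

theorem sum_smashRH_tmul_act_sbar (hS1 : ∀ h : H, Sbar (antipode k h) = h)
    (hS2 : ∀ h : H, antipode k (Sbar h) = h) (hact1 : ∀ a : A, act 1 a = a)
    (hact2 : ∀ (g h : H) (a : A), act (g * h) a = act g (act h a))
    {x : H} {ι : Type*} (repr : Repr k x ι) (a : A) :
    ∑ i ∈ repr.index, smashRH act (repr.right i ⊗ₜ act (Sbar (repr.left i)) a) = a ⊗ₜ x := by
  have h := congr(LinearMap.rTensor H (act.flip a)
    $(sum_sum_comul_right_mul_sbar_left hS1 hS2 repr))
  simp only [map_sum, LinearMap.rTensor_tmul, LinearMap.flip_apply, hact1, hact2] at h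
  simp_rw [smashRH_tmul act (ℛ k _), h]

theorem smash_dualBasis_right {t : H}
    (hS1 : ∀ h : H, Sbar (antipode k h) = h) (hS2 : ∀ h : H, antipode k (Sbar h) = h)
    (hfr1 : ∀ h : H, LinearMap.rTensor H (LinearMap.mulLeft k h) (hE Sbar t) =
      LinearMap.lTensor H (LinearMap.mulRight k h) (hE Sbar t))
    (hfr3 : TensorProduct.rid k H (LinearMap.lTensor H φ (hE Sbar t)) = 1)
    (hact1 : ∀ a : A, act 1 a = a)
    (hact2 : ∀ (g h : H) (a : A), act (g * h) a = act g (act h a)) (r : A ⊗[k] H) :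
    (hMulL act ∘ₗ
      TensorProduct.map (TensorProduct.mk k A H 1) ((TensorProduct.mk k A H).flip 1) ∘ₗ
      LinearMap.lTensor H
        (hNu φ ∘ₗ hMulL act ∘ₗ (TensorProduct.mk k (A ⊗[k] H) (A ⊗[k] H)).flip r ∘ₗ
          TensorProduct.mk k A H 1))
      (hE Sbar t) = r := by
  induction r using TensorProduct.induction_on with
  | zero => simp
  | tmul a h =>
    -- Expanding both factors gives `∑ φ(S̄(t₁₁) h) • Ψ(t₁₂ ⊗ t₂)`; coassociativity moves the
    -- second comultiplication onto `t₂`, where `sum_smashRH_tmul_act_sbar` collapses it.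
    let ψ : H →ₗ[k] k := φ ∘ₗ LinearMap.mulRight k h ∘ₗ Sbar
    let Ψ : H ⊗[k] H →ₗ[k] A ⊗[k] H := smashRH act ∘ₗ (TensorProduct.comm k A H).toLinearMap ∘ₗ
      LinearMap.rTensor H (act.flip a ∘ₗ Sbar)
    have coassoc := congr(TensorProduct.lid k (A ⊗[k] H) (TensorProduct.map ψ Ψ
      $(sum_tmul_tmul_eq (ℛ k t) (fun i => ℛ k ((ℛ k t).left i))
        (fun i => ℛ k ((ℛ k t).right i)))))
    simp only [map_sum, map_tmul, lid_tmul, ψ, Ψ, LinearMap.comp_apply, LinearMap.rTensor_tmul,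
      LinearEquiv.coe_coe, comm_tmul, LinearMap.flip_apply, LinearMap.mulRight_apply] at coassoc
    have frob := rid_lTensor_comp_mulRight hfr1 hfr3 h
    rw [hE_eq_sum (ℛ k t)] at frob ⊢
    simp only [map_sum, LinearMap.lTensor_tmul, rid_tmul, LinearMap.comp_apply,
      LinearMap.mulRight_apply] at frob
    simp only [map_sum, LinearMap.comp_apply, LinearMap.lTensor_tmul, map_tmul,
      TensorProduct.mk_apply, LinearMap.flip_apply, hMulL_tmul, hMul_one_tmul_tmul_one,
      hNu_one_tmul_sbar_hMul act φ hS1 hS2 (ℛ k _), tmul_sum, tmul_smul, map_smul]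
    rw [coassoc]
    simp_rw [← Finset.smul_sum, sum_smashRH_tmul_act_sbar act hS1 hS2 hact1 hact2, ← tmul_smul,
      ← tmul_sum, frob]
  | add r s hr hs =>
    simp only [map_add, LinearMap.comp_add, LinearMap.add_comp, LinearMap.lTensor_add,
      LinearMap.add_apply, hr, hs]

end SmashProduct

theorem smash_frobenius_extension_general
    (Sbar : H →ₗ[k] H)
    (hS1 : ∀ h : H, Sbar (HopfAlgebra.antipode (R := k) h) = h)
    (hS2 : ∀ h : H, HopfAlgebra.antipode (R := k) (Sbar h) = h)
    (t : H)
    (φ : H →ₗ[k] k)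
    (hφ : ∀ h : H, TensorProduct.rid k H
      (LinearMap.lTensor H φ (Coalgebra.comul h)) = φ h • (1 : H))
    -- (t₂ ⊗ S̄(t₁), φ) is a Frobenius system for H over k
    (hfr1 : ∀ h : H, LinearMap.rTensor H (LinearMap.mulLeft k h) (hE Sbar t) =
      LinearMap.lTensor H (LinearMap.mulRight k h) (hE Sbar t))
    (hfr2 : TensorProduct.lid k H (LinearMap.rTensor H φ (hE Sbar t)) = 1)
    (hfr3 : TensorProduct.rid k H (LinearMap.lTensor H φ (hE Sbar t)) = 1)
    -- A is a left H-module algebra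
    (act : H →ₗ[k] A →ₗ[k] A)
    (hact1 : ∀ a : A, act 1 a = a)
    (hact2 : ∀ (g h : H) (a : A), act (g * h) a = act g (act h a))
    (hactone : ∀ h : H, act h (1 : A) = (Coalgebra.counit (R := k) h) • (1 : A)) :
    -- ν̄ is an A-bimodule map
    (∀ (a a' : A) (r : A ⊗[k] H),
      hNu φ (hMul act (hMul act (a ⊗ₜ[k] (1 : H)) r) (a' ⊗ₜ[k] (1 : H))) =
        a * hNu φ r * a') ∧
    -- first dual-basis identity : Σ ν̄(r · (1 # t₂)) # S̄(t₁) = r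
    (∀ r : A ⊗[k] H,
      TensorProduct.map
        (hNu φ ∘ₗ hMulL act ∘ₗ TensorProduct.mk k (A ⊗[k] H) (A ⊗[k] H) r ∘ₗ
          TensorProduct.mk k A H 1)
        LinearMap.id (hE Sbar t) = r) ∧
    -- second dual-basis identity : Σ (1 # t₂) · (ν̄((1 # S̄(t₁)) · r) # 1) = r
    (∀ r : A ⊗[k] H,
      (hMulL act ∘ₗ
        TensorProduct.map (TensorProduct.mk k A H 1) ((TensorProduct.mk k A H).flip 1) ∘ₗ
        LinearMap.lTensor H
          (hNu φ ∘ₗ hMulL act ∘ₗ (TensorProduct.mk k (A ⊗[k] H) (A ⊗[k] H)).flip r ∘ₗ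
            TensorProduct.mk k A H 1))
        (hE Sbar t) = r) :=
  ⟨fun a a' r => by rw [hNu_hMul_tmul_one act φ hact1 hφ, hNu_tmul_one_hMul act φ hact1],
    smash_dualBasis_left act φ hfr1 hfr2 hactone,
    smash_dualBasis_right act φ hS1 hS2 hfr1 hfr3 hact1 hact2⟩

/-- `A # H` is a Frobenius extension of `A`, with Frobenius system
`(e = (1 # t₂) ⊗_A (1 # S̄(t₁)), ν̄ = id_A # φ)`. -/
theorem smash_frobenius_extension
    (Sbar : H →ₗ[k] H)
    (hS1 : ∀ h : H, Sbar (HopfAlgebra.antipode (R := k) h) = h)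
    (hS2 : ∀ h : H, HopfAlgebra.antipode (R := k) (Sbar h) = h)
    (t : H) (ht : ∀ h : H, h * t = (Coalgebra.counit (R := k) h) • t)
    (φ : H →ₗ[k] k)
    (hφ : ∀ h : H, TensorProduct.rid k H
      (LinearMap.lTensor H φ (Coalgebra.comul h)) = φ h • (1 : H))
    (hφt : φ t = 1)
    -- (t₂ ⊗ S̄(t₁), φ) is a Frobenius system for H over k
    (hfr1 : ∀ h : H, LinearMap.rTensor H (LinearMap.mulLeft k h) (hE Sbar t) =
      LinearMap.lTensor H (LinearMap.mulRight k h) (hE Sbar t))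
    (hfr2 : TensorProduct.lid k H (LinearMap.rTensor H φ (hE Sbar t)) = 1)
    (hfr3 : TensorProduct.rid k H (LinearMap.lTensor H φ (hE Sbar t)) = 1)
    -- A is a left H-module algebra
    (act : H →ₗ[k] A →ₗ[k] A)
    (hact1 : ∀ a : A, act 1 a = a)
    (hact2 : ∀ (g h : H) (a : A), act (g * h) a = act g (act h a))
    (hactmul : ∀ (h : H) (a b : A), act h (a * b) =
      LinearMap.mul' k A (TensorProduct.map (act.flip a) (act.flip b) (Coalgebra.comul h)))
    (hactone : ∀ h : H, act h (1 : A) = (Coalgebra.counit (R := k) h) • (1 : A)) :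
    -- ν̄ is an A-bimodule map
    (∀ (a a' : A) (r : A ⊗[k] H),
      hNu φ (hMul act (hMul act (a ⊗ₜ[k] (1 : H)) r) (a' ⊗ₜ[k] (1 : H))) =
        a * hNu φ r * a') ∧
    -- first dual-basis identity : Σ ν̄(r · (1 # t₂)) # S̄(t₁) = r
    (∀ r : A ⊗[k] H,
      TensorProduct.map
        (hNu φ ∘ₗ hMulL act ∘ₗ TensorProduct.mk k (A ⊗[k] H) (A ⊗[k] H) r ∘ₗ
          TensorProduct.mk k A H 1)
        LinearMap.id (hE Sbar t) = r) ∧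
    -- second dual-basis identity : Σ (1 # t₂) · (ν̄((1 # S̄(t₁)) · r) # 1) = r
    (∀ r : A ⊗[k] H,
      (hMulL act ∘ₗ
        TensorProduct.map (TensorProduct.mk k A H 1) ((TensorProduct.mk k A H).flip 1) ∘ₗ
        LinearMap.lTensor H
          (hNu φ ∘ₗ hMulL act ∘ₗ (TensorProduct.mk k (A ⊗[k] H) (A ⊗[k] H)).flip r ∘ₗ
            TensorProduct.mk k A H 1))
        (hE Sbar t) = r) :=
  smash_frobenius_extension_general Sbar hS1 hS2 t φ hφ hfr1 hfr2 hfr3 act hact1 hact2 hactone
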